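/- Let 𝒜 be a finite alphabet and ℱ ⊆ 𝒜⁺ a set of forbidden factors. Suppose there exists a real β > 1 such that |𝒜| ≥ β + Σ_{f∈ℱ} β^{1−|f|}. Then for all n ≥ 0, |ℒ_n(𝒜,ℱ)| ≥ β^n; in particular the growth rate satisfies α(𝒜,ℱ) ≥ β. -/

import Mathlib

/-!
Write `ℓₙ = |ℒₙ(𝒜,ℱ)|`. Appending a letter to a word of `ℒₙ` gives either a word of `ℒₙ₊₁`
or a word `s f` with `f ∈ ℱ` and `s ∈ ℒₙ₊₁₋|f|`, so `|𝒜| ℓₙ ≤ ℓₙ₊₁ + Σ_f ℓₙ₊₁₋|f|`.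
Arguing by strong induction on `n`, `ℓₘ ≤ β^(m-n) ℓₙ` for `m ≤ n`, hence the sum is at most
`(|𝒜| - β) ℓₙ` and `β ℓₙ ≤ ℓₙ₊₁`.
-/

open Filter

/-- The set of words of length `n` over the alphabet `A` avoiding every
forbidden factor in `F` (no element of `F` occurs as a contiguous subword). -/
def langN {A : Type*} (F : Set (List A)) (n : ℕ) : Set (List A) :=
  {w | w.length = n ∧ ∀ f ∈ F, ¬ f <:+: w}

theorem le_zpow_sub_mul_of_mul_le_succ {u : ℕ → ℝ} {β : ℝ} (hβ : 0 < β) {n : ℕ}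
    (h : ∀ m < n, β * u m ≤ u (m + 1)) {m : ℕ} (hm : m ≤ n) :
    u m ≤ β ^ ((m : ℤ) - n) * u n := by
  induction n, hm using Nat.le_induction with
  | base => simp
  | succ n hmn ih =>
    calc u m ≤ β ^ ((m : ℤ) - n) * u n := ih fun k hk => h k (by omega)
      _ = β ^ ((m : ℤ) - (n + 1 : ℕ)) * (β * u n) := by
        rw [← mul_assoc, ← zpow_add_one₀ hβ.ne']
        push_cast
        ring_nf
      _ ≤ β ^ ((m : ℤ) - (n + 1 : ℕ)) * u (n + 1) := by
        gcongr
        exact h n (by omega)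

theorem le_of_pow_le_of_tendsto_rpow_one_div {u : ℕ → ℝ} {β α : ℝ} (hβ : 0 ≤ β)
    (h : ∀ n, β ^ n ≤ u n) (hα : Tendsto (fun n : ℕ => u n ^ (1 / (n : ℝ))) atTop (nhds α)) :
    β ≤ α := by
  refine ge_of_tendsto hα ?_
  filter_upwards [eventually_ne_atTop 0] with n hn
  calc β = (β ^ n) ^ (1 / (n : ℝ)) := by rw [one_div, Real.pow_rpow_inv_natCast hβ hn]
    _ ≤ u n ^ (1 / (n : ℝ)) := by gcongr; exact h n

section langN

variable {A : Type*} (F : Set (List A))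

theorem langN_finite [Finite A] (n : ℕ) : (langN F n).Finite :=
  (List.finite_length_eq A n).subset fun _ hw => hw.1

theorem ncard_langN_zero (hF : ∀ f ∈ F, f ≠ ([] : List A)) : (langN F 0).ncard = 1 := by
  have : langN F 0 = {[]} := by
    ext w
    refine ⟨fun hw => List.length_eq_zero_iff.mp hw.1, ?_⟩
    rintro rfl
    exact ⟨rfl, fun f hf hfw => hF f hf (List.infix_nil.mp hfw)⟩
  rw [this, Set.ncard_singleton]

theorem exists_forbidden_suffix {n : ℕ} {w : List A} {a : A} (hw : w ∈ langN F n)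
    (hwa : w ++ [a] ∉ langN F (n + 1)) :
    ∃ f ∈ F, f.length ≤ n + 1 ∧ ∃ s ∈ langN F (n + 1 - f.length), s ++ f = w ++ [a] := by
  have hlen : (w ++ [a]).length = n + 1 := by simp [hw.1]
  obtain ⟨f, hfF, hf⟩ : ∃ f ∈ F, f <:+: w ++ [a] := by simpa [langN, hlen] using hwa
  obtain ⟨s, hs⟩ : f <:+ w ++ [a] := (List.infix_concat_iff.mp hf).resolve_right (hw.2 f hfF)
  have hf0 : 0 < f.length :=
    List.length_pos_iff.mpr fun hnil => hw.2 f hfF (hnil ▸ List.nil_infix)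
  have hslen : s.length + f.length = n + 1 := by rw [← List.length_append, hs, hlen]
  have hsw : s <+: w := List.prefix_of_prefix_length_le ⟨f, hs⟩ ⟨[a], rfl⟩ (by rw [hw.1]; omega)
  exact ⟨f, hfF, by omega, s,
    ⟨by omega, fun g hg hgs => hw.2 g hg (hgs.trans hsw.isInfix)⟩, hs⟩

theorem card_mul_ncard_langN_le [Fintype A] (n : ℕ) (s : Finset F)
    (hs : ∀ f : F, (f : List A).length ≤ n + 1 → f ∈ s) :
    Fintype.card A * (langN F n).ncard ≤
      (langN F (n + 1)).ncard + ∑ f ∈ s, (langN F (n + 1 - (f : List A).length)).ncard := by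
  let bad : Set (List A) :=
    ⋃ f ∈ s, (· ++ (f : List A)) '' langN F (n + 1 - (f : List A).length)
  have hsub : (fun p : List A × A => p.1 ++ [p.2]) '' (langN F n ×ˢ Set.univ) ⊆
      langN F (n + 1) ∪ bad := by
    rintro _ ⟨⟨w, a⟩, ⟨hw, -⟩, rfl⟩
    by_cases hwa : w ++ [a] ∈ langN F (n + 1)
    · exact Or.inl hwa
    obtain ⟨f, hfF, hfl, u, hu, hua⟩ := exists_forbidden_suffix F hw hwa
    exact Or.inr (Set.mem_biUnion (hs ⟨f, hfF⟩ hfl) ⟨u, hu, hua⟩)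
  have hfin : (langN F (n + 1) ∪ bad).Finite :=
    (langN_finite F _).union (s.finite_toSet.biUnion fun f _ => (langN_finite F _).image _)
  have hinj : Function.Injective fun p : List A × A => p.1 ++ [p.2] := fun p q hpq => by
    obtain ⟨h₁, h₂⟩ := List.append_inj' hpq rfl
    exact Prod.ext h₁ (List.singleton_inj.mp h₂)
  calc Fintype.card A * (langN F n).ncard
      = ((fun p : List A × A => p.1 ++ [p.2]) '' (langN F n ×ˢ Set.univ)).ncard := by
        rw [Set.ncard_image_of_injective _ hinj, Set.ncard_prod, Set.ncard_univ,
          Nat.card_eq_fintype_card, mul_comm]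
    _ ≤ (langN F (n + 1) ∪ bad).ncard := Set.ncard_le_ncard hsub hfin
    _ ≤ (langN F (n + 1)).ncard + bad.ncard := Set.ncard_union_le _ _
    _ ≤ _ := by
      gcongr
      exact (Finset.set_ncard_biUnion_le _ _).trans
        (Finset.sum_le_sum fun f _ => Set.ncard_image_le (langN_finite F _))

theorem mul_ncard_langN_le_ncard_langN_succ [Fintype A] (hF : ∀ f ∈ F, f ≠ ([] : List A))
    {β : ℝ} (hβ : 0 < β)
    (hsum : Summable fun f : F => β ^ ((1 : ℤ) - ((f : List A).length : ℤ)))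
    (hcond : β + ∑' f : F, β ^ ((1 : ℤ) - ((f : List A).length : ℤ)) ≤ (Fintype.card A : ℝ))
    (n : ℕ) : β * ((langN F n).ncard : ℝ) ≤ ((langN F (n + 1)).ncard : ℝ) := by
  induction n using Nat.strong_induction_on with
  | _ n ih =>
    have hfin : {f : F | (f : List A).length ≤ n + 1}.Finite :=
      (List.finite_length_le A (n + 1)).preimage Subtype.val_injective.injOn
    set s := hfin.toFinset
    have hcount : (Fintype.card A : ℝ) * (langN F n).ncard ≤
        (langN F (n + 1)).ncard + ∑ f ∈ s, ((langN F (n + 1 - (f : List A).length)).ncard : ℝ) := by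
      exact_mod_cast card_mul_ncard_langN_le F n s fun f hf => hfin.mem_toFinset.mpr hf
    have hterm : ∀ f ∈ s, ((langN F (n + 1 - (f : List A).length)).ncard : ℝ) ≤
        β ^ ((1 : ℤ) - ((f : List A).length : ℤ)) * (langN F n).ncard := by
      intro f hf
      have hfl : (f : List A).length ≤ n + 1 := hfin.mem_toFinset.mp hf
      have hf1 : 0 < (f : List A).length := List.length_pos_iff.mpr (hF f f.2)
      have := le_zpow_sub_mul_of_mul_le_succ (u := fun k => ((langN F k).ncard : ℝ)) hβ ih
        (m := n + 1 - (f : List A).length) (by omega)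
      rwa [show ((n + 1 - (f : List A).length : ℕ) : ℤ) - n = 1 - (f : List A).length by omega]
        at this
    have hweights : ∑ f ∈ s, β ^ ((1 : ℤ) - ((f : List A).length : ℤ)) ≤
        ∑' f : F, β ^ ((1 : ℤ) - ((f : List A).length : ℤ)) :=
      hsum.sum_le_tsum s fun f _ => (zpow_pos hβ _).le
    have hbad : ∑ f ∈ s, ((langN F (n + 1 - (f : List A).length)).ncard : ℝ) ≤
        (Fintype.card A - β) * (langN F n).ncard := by
      calc _ ≤ ∑ f ∈ s, β ^ ((1 : ℤ) - ((f : List A).length : ℤ)) * (langN F n).ncard :=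
            Finset.sum_le_sum hterm
        _ ≤ (Fintype.card A - β) * (langN F n).ncard := by
          rw [← Finset.sum_mul]
          gcongr
          linarith
    linarith

end langN

/-- If there is `β > 1` with `|𝒜| ≥ β + Σ_{f ∈ ℱ} β^(1-|f|)`, then
`|ℒ_n(𝒜,ℱ)| ≥ β^n` for all `n`; in particular, the growth rate
`α(𝒜,ℱ) = lim_n |ℒ_n(𝒜,ℱ)|^(1/n)` satisfies `α(𝒜,ℱ) ≥ β`. -/
theorem stmt1 {A : Type*} [Fintype A] (F : Set (List A))
    (hF : ∀ f ∈ F, f ≠ ([] : List A)) (β : ℝ) (hβ : 1 < β)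
    (hsum : Summable fun f : F => β ^ ((1 : ℤ) - ((f : List A).length : ℤ)))
    (hcond : β + ∑' f : F, β ^ ((1 : ℤ) - ((f : List A).length : ℤ)) ≤ (Fintype.card A : ℝ)) :
    (∀ n : ℕ, β ^ n ≤ ((langN F n).ncard : ℝ)) ∧
    ∀ α : ℝ,
      Tendsto (fun n : ℕ => ((langN F n).ncard : ℝ) ^ (1 / (n : ℝ))) atTop (nhds α) →
      β ≤ α := by
  have hβ0 : 0 < β := zero_lt_one.trans hβ
  have hpow : ∀ n : ℕ, β ^ n ≤ ((langN F n).ncard : ℝ) := by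
    intro n
    induction n with
    | zero => simp [ncard_langN_zero F hF]
    | succ n ih =>
      calc β ^ (n + 1) = β * β ^ n := pow_succ' β n
        _ ≤ β * (langN F n).ncard := by gcongr
        _ ≤ (langN F (n + 1)).ncard :=
          mul_ncard_langN_le_ncard_langN_succ F hF hβ0 hsum hcond n
  exact ⟨hpow, fun α hα => le_of_pow_le_of_tendsto_rpow_one_div hβ0.le hpow hα⟩
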